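/- arXiv:2310.02706 — 2 statements merged into one kernel-verified Lean document; each statement's English description precedes it below -/
import Mathlib

section
/- For every x > 0, ∫₀^∞ |3μ² - x²|/(μ² + x²)³ dμ = 9/(8√3 · x³). -/
/-! The integrand is `|G'|` for `G μ = -μ / (μ² + x²)²`, which vanishes at `0` and at `∞`, decreases
on `(0, b]` and increases on `[b, ∞)` with `b = x / √3`. Hence the integral is
`G 0 - 2 G b + G ∞ = 2 b / (4 b²)² = 1 / (8 b³)`. -/

open MeasureTheory Real Set Filter Topology

theorem integral_Ioc_abs_of_hasDerivAt_of_nonpos {f G : ℝ → ℝ} {a b : ℝ} (hab : a ≤ b)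
    (hG : ∀ t ∈ Icc a b, HasDerivAt G (f t) t) (hf : ∀ t ∈ Ioc a b, f t ≤ 0) :
    IntegrableOn f (Ioc a b) ∧ ∫ t in Ioc a b, |f t| = G a - G b := by
  have hcont : ContinuousOn (fun t => -G t) (Icc a b) :=
    fun t ht => (hG t ht).continuousAt.continuousWithinAt.neg
  have hderiv : ∀ t ∈ Ioo a b, HasDerivAt (fun t => -G t) (-f t) t :=
    fun t ht => (hG t (Ioo_subset_Icc_self ht)).neg
  have hint : IntervalIntegrable (fun t => -f t) volume a b :=
    intervalIntegral.intervalIntegrable_deriv_of_nonneg (by rwa [uIcc_of_le hab])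
      (by simpa [hab] using hderiv)
      (by simpa [hab] using fun t ht => neg_nonneg.2 (hf t (Ioo_subset_Ioc_self ht)))
  refine ⟨by simpa using ((intervalIntegrable_iff_integrableOn_Ioc_of_le hab).1 hint).neg, ?_⟩
  calc ∫ t in Ioc a b, |f t| = ∫ t in a..b, -f t := by
        rw [intervalIntegral.integral_of_le hab]
        exact setIntegral_congr_fun measurableSet_Ioc fun t ht => abs_of_nonpos (hf t ht)
    _ = G a - G b := by
        rw [intervalIntegral.integral_eq_sub_of_hasDerivAt_of_le hab hcont hderiv hint]; ring

theorem integral_Ioi_abs_of_hasDerivAt_of_nonneg {f G : ℝ → ℝ} {b l : ℝ}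
    (hG : ∀ t ∈ Ici b, HasDerivAt G (f t) t) (hf : ∀ t ∈ Ioi b, 0 ≤ f t)
    (hGl : Tendsto G atTop (𝓝 l)) :
    IntegrableOn f (Ioi b) ∧ ∫ t in Ioi b, |f t| = l - G b := by
  refine ⟨integrableOn_Ioi_deriv_of_nonneg' hG hf hGl, ?_⟩
  rw [← integral_Ioi_of_hasDerivAt_of_nonneg' hG hf hGl]
  exact setIntegral_congr_fun measurableSet_Ioi fun t ht => abs_of_nonneg (hf t ht)

theorem integral_Ioi_abs_of_hasDerivAt_of_sign_change {f G : ℝ → ℝ} {a b l : ℝ} (hab : a ≤ b)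
    (hG : ∀ t ∈ Ici a, HasDerivAt G (f t) t) (hneg : ∀ t ∈ Ioc a b, f t ≤ 0)
    (hpos : ∀ t ∈ Ioi b, 0 ≤ f t) (hGl : Tendsto G atTop (𝓝 l)) :
    ∫ t in Ioi a, |f t| = G a - 2 * G b + l := by
  obtain ⟨hint₁, hval₁⟩ := integral_Ioc_abs_of_hasDerivAt_of_nonpos hab
    (fun t ht => hG t ht.1) hneg
  obtain ⟨hint₂, hval₂⟩ := integral_Ioi_abs_of_hasDerivAt_of_nonneg
    (fun t ht => hG t (hab.trans ht)) hpos hGl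
  rw [← Ioc_union_Ioi_eq_Ioi hab, setIntegral_union (Ioc_disjoint_Ioi le_rfl) measurableSet_Ioi
    hint₁.abs hint₂.abs, hval₁, hval₂]
  ring

theorem hasDerivAt_neg_div_sq_add_sq {c : ℝ} (hc : 0 < c) (t : ℝ) :
    HasDerivAt (fun t => -t / (t ^ 2 + c) ^ 2) ((3 * t ^ 2 - c) / (t ^ 2 + c) ^ 3) t := by
  have hpos : 0 < t ^ 2 + c := by positivity
  have hden : HasDerivAt (fun t => (t ^ 2 + c) ^ 2) (2 * (t ^ 2 + c) ^ 1 * (2 * t ^ 1)) t :=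
    ((hasDerivAt_pow 2 t).add_const c).pow 2
  refine ((hasDerivAt_neg t).div hden (pow_ne_zero 2 hpos.ne')).congr_deriv ?_
  field_simp
  ring

theorem tendsto_div_sq_add_sq_atTop {c : ℝ} (hc : 0 ≤ c) :
    Tendsto (fun t => t / (t ^ 2 + c) ^ 2) atTop (𝓝 0) := by
  refine squeeze_zero' ?_ ?_ (tendsto_inv_atTop_zero.comp (tendsto_pow_atTop three_ne_zero))
  · filter_upwards [eventually_ge_atTop 0] with t ht
    positivity
  · filter_upwards [eventually_gt_atTop 0] with t ht
    calc t / (t ^ 2 + c) ^ 2 ≤ t / (t ^ 2) ^ 2 := by gcongr; linarith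
      _ = (t ^ 3)⁻¹ := by field_simp

theorem stmt_6 (x : ℝ) (hx : 0 < x) :
    ∫ μ in Set.Ioi (0 : ℝ), |3 * μ ^ 2 - x ^ 2| / (μ ^ 2 + x ^ 2) ^ 3
      = 9 / (8 * Real.sqrt 3 * x ^ 3) := by
  obtain ⟨b, hb, rfl⟩ : ∃ b, 0 < b ∧ x = √3 * b := ⟨x / √3, by positivity, by field_simp⟩
  have hx2 : (√3 * b) ^ 2 = 3 * b ^ 2 := by simp [mul_pow]
  calc ∫ μ in Ioi 0, |3 * μ ^ 2 - (√3 * b) ^ 2| / (μ ^ 2 + (√3 * b) ^ 2) ^ 3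
      = ∫ μ in Ioi 0, |(3 * μ ^ 2 - (√3 * b) ^ 2) / (μ ^ 2 + (√3 * b) ^ 2) ^ 3| :=
        setIntegral_congr_fun measurableSet_Ioi fun μ _ => by
          rw [abs_div, abs_of_pos (by positivity : (0 : ℝ) < (μ ^ 2 + (√3 * b) ^ 2) ^ 3)]
    _ = -0 / (0 ^ 2 + (√3 * b) ^ 2) ^ 2 - 2 * (-b / (b ^ 2 + (√3 * b) ^ 2) ^ 2) + 0 :=
        integral_Ioi_abs_of_hasDerivAt_of_sign_change hb.le
          (fun t _ => hasDerivAt_neg_div_sq_add_sq (by positivity) t)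
          (fun t ⟨ht₀, htb⟩ => div_nonpos_of_nonpos_of_nonneg (by nlinarith) (by positivity))
          (fun t (htb : b < t) => div_nonneg (by nlinarith) (by positivity))
          (by simpa [neg_div] using (tendsto_div_sq_add_sq_atTop (sq_nonneg (√3 * b))).neg)
    _ = 9 / (8 * √3 * (√3 * b) ^ 3) := by
        have h9 : √3 * (√3 * b) ^ 3 = 9 * b ^ 3 := by
          linear_combination (√3 ^ 2 + 3) * b ^ 3 * sq_sqrt (zero_le_three (α := ℝ))
        rw [hx2, mul_assoc, h9]
        field_simp
        ring
end

section
/- In the CAR algebra generated by elements a_q satisfying the canonical anticommutation relations, let P, H be disjoint finite index sets and g, g̃ : P × H → ℂ. Define c*(g) = ∑_{p∈P, h∈H} g(p,h) a_p* a_h* and c(g) its formal adjoint ∑ conj(g(p,h)) a_h a_p. Then [c(g), c(g̃)] = 0, [c*(g), c*(g̃)] = 0, and [c(g), c*(g̃)] = ⟨g, g̃⟩·1 − ∑_{p, h₁, h₂} conj(g(p,h₁)) g̃(p,h₂) a_{h₂}* a_{h₁} − ∑_{p₁, p₂, h} conj(g(p₁,h)) g̃(p₂,h) a_{p₂}* a_{p₁},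 where ⟨g, g̃⟩ = ∑_{p,h} conj(g(p,h)) g̃(p,h). -/
open Finset

/-- Generalized approximate CCR for weighted fermionic pair operators. -/
theorem stmt_18 {A : Type*} [Ring A] [Algebra ℂ A] {I : Type*} [DecidableEq I]
    (a astar : I → A)
    (hcar1 : ∀ q q', a q * astar q' + astar q' * a q = if q = q' then (1 : A) else 0)
    (hcar2 : ∀ q q', a q * a q' + a q' * a q = 0)
    (hcar3 : ∀ q q', astar q * astar q' + astar q' * astar q = 0)
    (P H : Finset I) (hPH : Disjoint P H)
    (g g' : I → I → ℂ)
    (cstar : (I → I → ℂ) → A) (c : (I → I → ℂ) → A)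
    (hcstar : ∀ f, cstar f = ∑ p ∈ P, ∑ h ∈ H, f p h • (astar p * astar h))
    (hc : ∀ f, c f = ∑ p ∈ P, ∑ h ∈ H, (starRingEnd ℂ) (f p h) • (a h * a p)) :
    c g * c g' - c g' * c g = 0 ∧
    cstar g * cstar g' - cstar g' * cstar g = 0 ∧
    c g * cstar g' - cstar g' * c g
      = (∑ p ∈ P, ∑ h ∈ H, (starRingEnd ℂ) (g p h) * g' p h) • (1 : A)
        - ∑ p ∈ P, ∑ h₁ ∈ H, ∑ h₂ ∈ H,
            ((starRingEnd ℂ) (g p h₁) * g' p h₂) • (astar h₂ * a h₁)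
        - ∑ p₁ ∈ P, ∑ p₂ ∈ P, ∑ h ∈ H,
            ((starRingEnd ℂ) (g p₁ h) * g' p₂ h) • (astar p₂ * a p₁) := by
  -- basic consequences of the CAR
  have haa : ∀ q q', a q * a q' = -(a q' * a q) := fun q q' =>
    eq_neg_of_add_eq_zero_left (hcar2 q q')
  have hss : ∀ q q', astar q * astar q' = -(astar q' * astar q) := fun q q' =>
    eq_neg_of_add_eq_zero_left (hcar3 q q')
  have has : ∀ q q', a q * astar q' = (if q = q' then (1:A) else 0) - astar q' * a q := by
    intro q q'
    rw [eq_sub_iff_add_eq]; exact hcar1 q q'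
  have hdisj : ∀ p ∈ P, ∀ h ∈ H, p ≠ h := by
    intro p hp h hh hph
    exact (Finset.disjoint_left.mp hPH hp) (hph ▸ hh)
  -- expansion of products of double sums
  have hexpand : ∀ (u v : I → I → ℂ) (x y : I → I → A),
      (∑ p ∈ P, ∑ h ∈ H, u p h • x p h) * (∑ p ∈ P, ∑ h ∈ H, v p h • y p h)
        = ∑ p ∈ P, ∑ h ∈ H, ∑ p' ∈ P, ∑ h' ∈ H,
            (u p h * v p' h') • (x p h * y p' h') := by
    intro u v x y
    rw [Finset.sum_mul]
    refine Finset.sum_congr rfl fun p _ => ?_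
    rw [Finset.sum_mul]
    refine Finset.sum_congr rfl fun h _ => ?_
    rw [Finset.mul_sum]
    refine Finset.sum_congr rfl fun p' _ => ?_
    rw [Finset.mul_sum]
    refine Finset.sum_congr rfl fun h' _ => ?_
    rw [smul_mul_smul_comm]
  have comm4 : ∀ f : I → I → I → I → A,
      (∑ p ∈ P, ∑ h ∈ H, ∑ p' ∈ P, ∑ h' ∈ H, f p h p' h')
        = ∑ p ∈ P, ∑ h ∈ H, ∑ p' ∈ P, ∑ h' ∈ H, f p' h' p h := by
    intro f
    calc (∑ p ∈ P, ∑ h ∈ H, ∑ p' ∈ P, ∑ h' ∈ H, f p h p' h')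
        = ∑ p ∈ P, ∑ p' ∈ P, ∑ h ∈ H, ∑ h' ∈ H, f p h p' h' :=
          Finset.sum_congr rfl fun p _ => Finset.sum_comm
      _ = ∑ p' ∈ P, ∑ p ∈ P, ∑ h ∈ H, ∑ h' ∈ H, f p h p' h' := Finset.sum_comm
      _ = ∑ p' ∈ P, ∑ p ∈ P, ∑ h' ∈ H, ∑ h ∈ H, f p h p' h' :=
          Finset.sum_congr rfl fun p' _ => Finset.sum_congr rfl fun p _ => Finset.sum_comm
      _ = ∑ p' ∈ P, ∑ h' ∈ H, ∑ p ∈ P, ∑ h ∈ H, f p h p' h' :=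
          Finset.sum_congr rfl fun p' _ => Finset.sum_comm
  have hmove : ∀ u z w : A, u * z = -(z * u) → u * w = -(w * u) →
      u * (z * w) = (z * w) * u := by
    intro u z w h1 h2
    calc u * (z * w) = (u * z) * w := (mul_assoc _ _ _).symm
      _ = (-(z * u)) * w := by rw [h1]
      _ = -(z * (u * w)) := by noncomm_ring
      _ = -(z * (-(w * u))) := by rw [h2]
      _ = (z * w) * u := by noncomm_ring
  have swapmul : ∀ x y z w : A, x * z = -(z * x) → x * w = -(w * x) →
      y * z = -(z * y) → y * w = -(w * y) → (x * y) * (z * w) = (z * w) * (x * y) := by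
    intro x y z w hxz hxw hyz hyw
    calc (x * y) * (z * w) = x * (y * (z * w)) := mul_assoc _ _ _
      _ = x * ((z * w) * y) := by rw [hmove y z w hyz hyw]
      _ = (x * (z * w)) * y := (mul_assoc _ _ _).symm
      _ = ((z * w) * x) * y := by rw [hmove x z w hxz hxw]
      _ = (z * w) * (x * y) := mul_assoc _ _ _
  have keygen : ∀ x y z w d1 d2 : A,
      x * z = d1 - z * x → y * w = d2 - w * y → y * z = -(z * y) → x * w = -(w * x) →
      (∀ t, d1 * t = t * d1) → (∀ t, d2 * t = t * d2) →
      (y * x) * (z * w) - (z * w) * (y * x)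
        = d1 * d2 - d1 * (w * y) - d2 * (z * x) := by
    intro x y z w d1 d2 hxz hyw hyz hxw hd1 hd2
    have key : (y * x) * (z * w)
        = d1 * d2 - d1 * (w * y) - d2 * (z * x) + (z * w) * (y * x) := by
      calc (y * x) * (z * w) = y * ((x * z) * w) := by noncomm_ring
        _ = y * ((d1 - z * x) * w) := by rw [hxz]
        _ = (y * d1) * w - (y * z) * (x * w) := by noncomm_ring
        _ = (y * d1) * w - (-(z * y)) * (-(w * x)) := by rw [hyz, hxw]
        _ = (d1 * y) * w - z * ((y * w) * x) := by rw [← hd1 y]; noncomm_ring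
        _ = (d1 * y) * w - z * ((d2 - w * y) * x) := by rw [hyw]
        _ = d1 * (y * w) - (z * (d2 * x) - (z * w) * (y * x)) := by noncomm_ring
        _ = d1 * (d2 - w * y) - (z * (x * d2) - (z * w) * (y * x)) := by rw [hyw, hd2 x]
        _ = d1 * d2 - d1 * (w * y) - (z * x) * d2 + (z * w) * (y * x) := by noncomm_ring
        _ = d1 * d2 - d1 * (w * y) - d2 * (z * x) + (z * w) * (y * x) := by
              rw [← hd2 (z * x)]
    rw [key]; noncomm_ring
  have key3 : ∀ p ∈ P, ∀ h ∈ H, ∀ p' ∈ P, ∀ h' ∈ H,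
      (a h * a p) * (astar p' * astar h') - (astar p' * astar h') * (a h * a p)
        = (if p = p' then (1:A) else 0) * (if h = h' then (1:A) else 0)
          - (if p = p' then (1:A) else 0) * (astar h' * a h)
          - (if h = h' then (1:A) else 0) * (astar p' * a p) := by
    intro p hp h hh p' hp' h' hh'
    have h1 : a h * astar p' = -(astar p' * a h) := by
      have h0 := has h p'
      rw [if_neg (Ne.symm (hdisj p' hp' h hh)), zero_sub] at h0
      exact h0
    have h2 : a p * astar h' = -(astar h' * a p) := by
      have h0 := has p h'
      rw [if_neg (hdisj p hp h' hh'), zero_sub] at h0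
      exact h0
    have hd1 : ∀ t : A, (if p = p' then (1:A) else 0) * t
        = t * (if p = p' then (1:A) else 0) := by
      intro t; split_ifs <;> simp
    have hd2 : ∀ t : A, (if h = h' then (1:A) else 0) * t
        = t * (if h = h' then (1:A) else 0) := by
      intro t; split_ifs <;> simp
    exact keygen (a p) (a h) (astar p') (astar h') _ _ (has p p') (has h h') h1 h2 hd1 hd2
  have smul_ite' : ∀ (s : ℂ) (c : Prop) [Decidable c] (x y : A),
      s • (if c then x else y) = if c then s • x else s • y := by
    intro s c _ x y; split_ifs <;> rfl
  refine ⟨?_, ?_, ?_⟩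
  · -- [c g, c g'] = 0
    simp only [hc, hexpand]
    rw [sub_eq_zero]
    refine Eq.trans ?_ (comm4 (fun p h p' h' =>
      ((starRingEnd ℂ) (g' p h) * (starRingEnd ℂ) (g p' h')) •
        ((a h * a p) * (a h' * a p')))).symm
    refine Finset.sum_congr rfl fun p _ => Finset.sum_congr rfl fun h _ =>
      Finset.sum_congr rfl fun p' _ => Finset.sum_congr rfl fun h' _ => ?_
    rw [mul_comm ((starRingEnd ℂ) (g p h)) ((starRingEnd ℂ) (g' p' h')),
      swapmul (a h) (a p) (a h') (a p') (haa _ _) (haa _ _) (haa _ _) (haa _ _)]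
  · -- [c* g, c* g'] = 0
    simp only [hcstar, hexpand]
    rw [sub_eq_zero]
    refine Eq.trans ?_ (comm4 (fun p h p' h' =>
      (g' p h * g p' h') • ((astar p * astar h) * (astar p' * astar h')))).symm
    refine Finset.sum_congr rfl fun p _ => Finset.sum_congr rfl fun h _ =>
      Finset.sum_congr rfl fun p' _ => Finset.sum_congr rfl fun h' _ => ?_
    rw [mul_comm (g p h) (g' p' h'),
      swapmul (astar p) (astar h) (astar p') (astar h') (hss _ _) (hss _ _) (hss _ _) (hss _ _)]
  · -- the main identity
    simp only [hc, hcstar, hexpand]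
    rw [comm4 (fun p h p' h' =>
      (g' p h * (starRingEnd ℂ) (g p' h')) • ((astar p * astar h) * (a h' * a p')))]
    simp only [← Finset.sum_sub_distrib]
    have main : ∀ p ∈ P, ∀ h ∈ H,
        (∑ p' ∈ P, ∑ h' ∈ H,
          (((starRingEnd ℂ) (g p h) * g' p' h') • ((a h * a p) * (astar p' * astar h'))
            - (g' p' h' * (starRingEnd ℂ) (g p h)) • ((astar p' * astar h') * (a h * a p))))
          = ((starRingEnd ℂ) (g p h) * g' p h) • (1:A)
            - (∑ h' ∈ H, ((starRingEnd ℂ) (g p h) * g' p h') • (astar h' * a h))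
            - (∑ p' ∈ P, ((starRingEnd ℂ) (g p h) * g' p' h) • (astar p' * a p)) := by
      intro p hp h hh
      have step1 : ∀ p' ∈ P, ∀ h' ∈ H,
          ((starRingEnd ℂ) (g p h) * g' p' h') • ((a h * a p) * (astar p' * astar h'))
            - (g' p' h' * (starRingEnd ℂ) (g p h)) • ((astar p' * astar h') * (a h * a p))
          = ((starRingEnd ℂ) (g p h) * g' p' h') •
              ((if p = p' then (1:A) else 0) * (if h = h' then (1:A) else 0))
            - ((starRingEnd ℂ) (g p h) * g' p' h') •
              ((if p = p' then (1:A) else 0) * (astar h' * a h))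
            - ((starRingEnd ℂ) (g p h) * g' p' h') •
              ((if h = h' then (1:A) else 0) * (astar p' * a p)) := by
        intro p' hp' h' hh'
        rw [mul_comm (g' p' h') ((starRingEnd ℂ) (g p h)), ← smul_sub,
          key3 p hp h hh p' hp' h' hh', smul_sub, smul_sub]
      rw [Finset.sum_congr rfl fun p' hp' => Finset.sum_congr rfl fun h' hh' =>
        step1 p' hp' h' hh']
      simp only [Finset.sum_sub_distrib]
      congr 1
      · congr 1
        · -- delta-delta term
          have innerA : ∀ p' ∈ P,
              (∑ h' ∈ H, ((starRingEnd ℂ) (g p h) * g' p' h') •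
                ((if p = p' then (1:A) else 0) * (if h = h' then (1:A) else 0)))
              = if p = p' then ((starRingEnd ℂ) (g p h) * g' p' h) • (1:A) else 0 := by
            intro p' _
            by_cases hpp' : p = p'
            · rw [if_pos hpp']
              simp only [if_pos hpp', one_mul, smul_ite', smul_zero]
              rw [Finset.sum_ite_eq H h
                (fun h' => ((starRingEnd ℂ) (g p h) * g' p' h') • (1:A)), if_pos hh]
            · simp [hpp']
          rw [Finset.sum_congr rfl innerA,
            Finset.sum_ite_eq P p
              (fun p' => ((starRingEnd ℂ) (g p h) * g' p' h) • (1:A)), if_pos hp]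
        · -- hole-hole term
          have innerB : ∀ p' ∈ P,
              (∑ h' ∈ H, ((starRingEnd ℂ) (g p h) * g' p' h') •
                ((if p = p' then (1:A) else 0) * (astar h' * a h)))
              = if p = p' then
                  (∑ h' ∈ H, ((starRingEnd ℂ) (g p h) * g' p' h') • (astar h' * a h))
                else 0 := by
            intro p' _
            by_cases hpp' : p = p'
            · simp [hpp']
            · simp [hpp']
          rw [Finset.sum_congr rfl innerB,
            Finset.sum_ite_eq P p
              (fun p' => ∑ h' ∈ H, ((starRingEnd ℂ) (g p h) * g' p' h') • (astar h' * a h)),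
            if_pos hp]
      · -- particle-particle term
        have innerC : ∀ p' ∈ P,
            (∑ h' ∈ H, ((starRingEnd ℂ) (g p h) * g' p' h') •
              ((if h = h' then (1:A) else 0) * (astar p' * a p)))
            = ((starRingEnd ℂ) (g p h) * g' p' h) • (astar p' * a p) := by
          intro p' _
          simp only [ite_mul, one_mul, zero_mul, smul_ite', smul_zero]
          rw [Finset.sum_ite_eq H h
            (fun h' => ((starRingEnd ℂ) (g p h) * g' p' h') • (astar p' * a p)), if_pos hh]
        rw [Finset.sum_congr rfl innerC]
    rw [Finset.sum_congr rfl fun p hp => Finset.sum_congr rfl fun h hh => main p hp h hh]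
    simp only [Finset.sum_sub_distrib, Finset.sum_smul]
    congr 1
    refine Finset.sum_congr rfl fun p _ => Finset.sum_comm
end
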